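/- Let H be a Hopf algebra with antipode S, p ∈ H primitive, x ∈ H with ε(x) = 0, and ⊤ a natural growth operation satisfying Δ(x ⊤ p) = x ⊗ p + x ⊤ p ⊗ 1 + 1 ⊗ (x ⊤ p) + Σ_{(x)} x^{(1)} ⊗ (x^{(2)} ⊤ p) where Δ̃(x) = Σ x^{(1)} ⊗ x^{(2)}. Then S(x ⊤ p) = −x ⊤ p − S(x)p − Σ_{(x)} S(x^{(1)})(x^{(2)} ⊤ p). -/

import Mathlib

/-!
Apply the antipode axiom `m ∘ (S ⊗ id) ∘ Δ = η ∘ ε` to `x ⊤ p`. The growth formula writes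
`Δ(x ⊤ p)` as `x ⊤ p ⊗ 1 + 1 ⊗ x ⊤ p + u` with `u = x ⊗ p + Σ x⁽¹⁾ ⊗ (x⁽²⁾ ⊤ p)`, and
`ε ⊗ id` kills `u` because `ε(x) = 0`; hence `ε(x ⊤ p) = 0` and the axiom reduces to
`S(x ⊤ p) + x ⊤ p + m((S ⊗ id) u) = 0`.
-/

open scoped TensorProduct

section

variable {H : Type*} [CommRing H] [HopfAlgebra ℚ H]

/-- The reduced coproduct `Δ̃(x) = Δ(x) − 1 ⊗ x − x ⊗ 1`. -/
noncomputable def rcomul (x : H) : H ⊗[ℚ] H :=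
  Coalgebra.comul x - 1 ⊗ₜ[ℚ] x - x ⊗ₜ[ℚ] 1

open Coalgebra (comul counit rTensor_counit_comul)
open LinearMap TensorProduct

theorem LinearMap.rTensor_lTensor_apply {R M N P Q : Type*} [CommSemiring R]
    [AddCommMonoid M] [AddCommMonoid N] [AddCommMonoid P] [AddCommMonoid Q] [Module R M]
    [Module R N] [Module R P] [Module R Q] (f : M →ₗ[R] P) (g : N →ₗ[R] Q) (z : M ⊗[R] N) :
    f.rTensor Q (g.lTensor M z) = map f g z := by
  rw [← comp_apply, rTensor_comp_lTensor]

theorem LinearMap.lTensor_rTensor_apply {R M N P Q : Type*} [CommSemiring R]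
    [AddCommMonoid M] [AddCommMonoid N] [AddCommMonoid P] [AddCommMonoid Q] [Module R M]
    [Module R N] [Module R P] [Module R Q] (f : M →ₗ[R] P) (g : N →ₗ[R] Q) (z : M ⊗[R] N) :
    g.lTensor P (f.rTensor N z) = map f g z := by
  rw [← comp_apply, lTensor_comp_rTensor]

theorem Bialgebra.algebraMap_counit_eq_zero_of_comul_eq {R A : Type*} [CommSemiring R]
    [Ring A] [Bialgebra R A] {y : A} {u : A ⊗[R] A}
    (h : comul (R := R) y = y ⊗ₜ[R] 1 + 1 ⊗ₜ[R] y + u) (hu : (counit (A := A)).rTensor A u = 0) :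
    algebraMap R A (counit y) = 0 := by
  have key := congrArg (fun z => TensorProduct.lid R A ((counit (A := A)).rTensor A z)) h
  simp only [map_add, rTensor_counit_comul, rTensor_tmul, hu, TensorProduct.lid_tmul,
    Bialgebra.counit_one, one_smul, add_zero] at key
  rwa [Algebra.algebraMap_eq_smul_one, ← right_eq_add]

theorem HopfAlgebra.antipode_eq_neg_sub_of_comul_eq {R A : Type*} [CommSemiring R]
    [Ring A] [HopfAlgebra R A] {y : A} {u : A ⊗[R] A}
    (h : comul (R := R) y = y ⊗ₜ[R] 1 + 1 ⊗ₜ[R] y + u) (hu : (counit (A := A)).rTensor A u = 0) :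
    antipode R y = -y - mul' R A ((antipode R).rTensor A u) := by
  have hS := mul_antipode_rTensor_comul_apply (R := R) y
  rw [h, Bialgebra.algebraMap_counit_eq_zero_of_comul_eq h hu] at hS
  simp only [map_add, rTensor_tmul, mul'_apply, antipode_one, mul_one, one_mul] at hS
  rw [eq_sub_iff_add_eq, eq_neg_iff_add_eq_zero, ← hS]
  abel

theorem rTensor_counit_rcomul (x : H) :
    (counit (R := ℚ) (A := H)).rTensor H (rcomul x) = -(counit (R := ℚ) x ⊗ₜ[ℚ] 1) := by
  simp [rcomul, rTensor_counit_comul]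

theorem antipode_natural_growth_general
    (t : H →ₗ[ℚ] H →ₗ[ℚ] H) (p x : H)
    (hx : Coalgebra.counit (R := ℚ) x = 0)
    (hgrowth :
      (Coalgebra.comul (t x p) : H ⊗[ℚ] H)
        = x ⊗ₜ[ℚ] p + (t x p) ⊗ₜ[ℚ] 1 + 1 ⊗ₜ[ℚ] (t x p)
          + LinearMap.lTensor H (t.flip p) (rcomul x)) :
    HopfAlgebra.antipode (R := ℚ) (t x p)
      = -(t x p) - (HopfAlgebra.antipode (R := ℚ) x) * p
        - LinearMap.mul' ℚ H
            ((TensorProduct.map (HopfAlgebra.antipode (R := ℚ)) (t.flip p))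
              (rcomul x)) := by
  have hcomul : comul (R := ℚ) (t x p) = t x p ⊗ₜ[ℚ] 1 + 1 ⊗ₜ[ℚ] t x p
      + (x ⊗ₜ[ℚ] p + (t.flip p).lTensor H (rcomul x)) := by
    rw [hgrowth]; abel
  have hu : (counit (A := H)).rTensor H (x ⊗ₜ[ℚ] p + (t.flip p).lTensor H (rcomul x)) = 0 := by
    rw [map_add, rTensor_tmul, rTensor_lTensor_apply, ← lTensor_rTensor_apply,
      rTensor_counit_rcomul, hx]
    simp
  rw [HopfAlgebra.antipode_eq_neg_sub_of_comul_eq hcomul hu, map_add, map_add, rTensor_tmul,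
    mul'_apply, rTensor_lTensor_apply]
  abel

/-- Let `H` be a Hopf algebra with antipode `S`, `p ∈ H` primitive, `x ∈ H` with
`ε(x) = 0`, and `⊤ = t` a bilinear natural growth operation satisfying
`Δ(x ⊤ p) = x ⊗ p + (x ⊤ p) ⊗ 1 + 1 ⊗ (x ⊤ p) + Σ_{(x)} x⁽¹⁾ ⊗ (x⁽²⁾ ⊤ p)`
(the Sweedler sum being over the reduced coproduct of `x`).  Then
`S(x ⊤ p) = −(x ⊤ p) − S(x)·p − Σ_{(x)} S(x⁽¹⁾)·(x⁽²⁾ ⊤ p)`. -/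
theorem antipode_natural_growth
    (t : H →ₗ[ℚ] H →ₗ[ℚ] H) (p x : H)
    (hp : (Coalgebra.comul p : H ⊗[ℚ] H) = p ⊗ₜ[ℚ] 1 + 1 ⊗ₜ[ℚ] p)
    (hx : Coalgebra.counit (R := ℚ) x = 0)
    (hgrowth :
      (Coalgebra.comul (t x p) : H ⊗[ℚ] H)
        = x ⊗ₜ[ℚ] p + (t x p) ⊗ₜ[ℚ] 1 + 1 ⊗ₜ[ℚ] (t x p)
          + LinearMap.lTensor H (t.flip p) (rcomul x)) :
    HopfAlgebra.antipode (R := ℚ) (t x p)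
      = -(t x p) - (HopfAlgebra.antipode (R := ℚ) x) * p
        - LinearMap.mul' ℚ H
            ((TensorProduct.map (HopfAlgebra.antipode (R := ℚ)) (t.flip p))
              (rcomul x)) :=
  antipode_natural_growth_general t p x hx hgrowth

end
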